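/- Well-foundedness of the continuation chain: if π,p₀ ⊨ e and π ⊨ k (with respect to the root p₀), then for every pointer p ∈ dom(π), the iterated chain p, k(p), k(k(p)), … reaches null after finitely many applications of k. (Consequently the function stackOf, defined by stackOf(p) = [] if k(p) = null and stackOf(p) = e' :: stackOf(q) if k(p) = q ≠ null where the subtree of π rooted at q represents e', is well-defined.) -/
import Mathlib


set_option autoImplicit false

namespace RegexMachines

/-- Regular expressions over an alphabet `α`. -/
inductive RE (α : Type) : Type where
  | eps : RE α
  | ch (a : α) : RE α
  | star (e : RE α) : RE α
  | seq (e₁ e₂ : RE α) : RE α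
  | alt (e₁ e₂ : RE α) : RE α

/-- The big-step matching relation `e ⊨ w`. -/
inductive Matches {α : Type} : RE α → List α → Prop where
  | eps : Matches RE.eps []
  | ch (a : α) : Matches (RE.ch a) [a]
  | seq {e₁ e₂ : RE α} {w₁ w₂ : List α} :
      Matches e₁ w₁ → Matches e₂ w₂ → Matches (RE.seq e₁ e₂) (w₁ ++ w₂)
  | starNil {e : RE α} : Matches (RE.star e) []
  | starCons {e : RE α} {w₁ w₂ : List α} :
      Matches e w₁ → Matches (RE.star e) w₂ → Matches (RE.star e) (w₁ ++ w₂)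
  | altL {e₁ e₂ : RE α} {w : List α} : Matches e₁ w → Matches (RE.alt e₁ e₂) w
  | altR {e₁ e₂ : RE α} {w : List α} : Matches e₂ w → Matches (RE.alt e₁ e₂) w

/-- Configurations `⟨e | k | w⟩` of the EKW machine. -/
abbrev EKWConfig (α : Type) : Type := RE α × List (RE α) × List α

/-- Transitions of the EKW machine. -/
inductive EKWStep {α : Type} : EKWConfig α → EKWConfig α → Prop where
  | altL {e₁ e₂ : RE α} {k : List (RE α)} {w : List α} :
      EKWStep (RE.alt e₁ e₂, k, w) (e₁, k, w)
  | altR {e₁ e₂ : RE α} {k : List (RE α)} {w : List α} :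
      EKWStep (RE.alt e₁ e₂, k, w) (e₂, k, w)
  | seq {e₁ e₂ : RE α} {k : List (RE α)} {w : List α} :
      EKWStep (RE.seq e₁ e₂, k, w) (e₁, e₂ :: k, w)
  | starIn {e : RE α} {k : List (RE α)} {w : List α} :
      EKWStep (RE.star e, k, w) (e, RE.star e :: k, w)
  | starOut {e : RE α} {k : List (RE α)} {w : List α} :
      EKWStep (RE.star e, k, w) (RE.eps, k, w)
  | ch {a : α} {k : List (RE α)} {w : List α} :
      EKWStep (RE.ch a, k, a :: w) (RE.eps, k, w)
  | pop {e : RE α} {k : List (RE α)} {w : List α} :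
      EKWStep (RE.eps, e :: k, w) (e, k, w)

/-- Syntax-tree nodes stored in a heap; pointer arguments are natural numbers. -/
inductive Node (α : Type) : Type where
  | eps : Node α
  | ch (a : α) : Node α
  | alt (p₁ p₂ : ℕ) : Node α
  | seq (p₁ p₂ : ℕ) : Node α
  | star (p₁ : ℕ) : Node α

/-- A heap is a partial function from (non-null) pointers to nodes.
The distinguished null pointer is modelled by `none : Option ℕ` wherever a
pointer-or-null is needed. -/
abbrev Heap (α : Type) : Type := ℕ → Option (Node α)

/-- Disjointness of two heaps (the `⊗` side condition). -/
def hDisj {α : Type} (π₁ π₂ : Heap α) : Prop := ∀ q : ℕ, π₁ q = none ∨ π₂ q = none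

/-- Union of two heaps (`⊗`). -/
def hUnion {α : Type} (π₁ π₂ : Heap α) : Heap α :=
  fun q => (π₁ q).orElse (fun _ => π₂ q)

/-- The singleton heap `p ↦ v`. -/
def singleH {α : Type} (p : ℕ) (v : Node α) : Heap α :=
  fun q => if q = p then some v else none

/-- Domain of a heap. -/
def hDom {α : Type} (π : Heap α) : Set ℕ := { q : ℕ | (π q).isSome }

/-- `dom(π) ∪ {null}` as a set of pointer-or-null values. -/
def domP {α : Type} (π : Heap α) : Set (Option ℕ) :=
  insert none { q : Option ℕ | ∃ n : ℕ, q = some n ∧ (π n).isSome }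

/-- The representation relation `π, p ⊨ e`. -/
inductive HeapRepr {α : Type} : Heap α → ℕ → RE α → Prop where
  | eps {p : ℕ} : HeapRepr (singleH p Node.eps) p RE.eps
  | ch {p : ℕ} {a : α} : HeapRepr (singleH p (Node.ch a)) p (RE.ch a)
  | alt {π π₁ π₂ : Heap α} {p p₁ p₂ : ℕ} {e₁ e₂ : RE α} :
      π = hUnion (singleH p (Node.alt p₁ p₂)) (hUnion π₁ π₂) →
      hDisj (singleH p (Node.alt p₁ p₂)) π₁ →
      hDisj (singleH p (Node.alt p₁ p₂)) π₂ →
      hDisj π₁ π₂ →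
      HeapRepr π₁ p₁ e₁ → HeapRepr π₂ p₂ e₂ → HeapRepr π p (RE.alt e₁ e₂)
  | seq {π π₁ π₂ : Heap α} {p p₁ p₂ : ℕ} {e₁ e₂ : RE α} :
      π = hUnion (singleH p (Node.seq p₁ p₂)) (hUnion π₁ π₂) →
      hDisj (singleH p (Node.seq p₁ p₂)) π₁ →
      hDisj (singleH p (Node.seq p₁ p₂)) π₂ →
      hDisj π₁ π₂ →
      HeapRepr π₁ p₁ e₁ → HeapRepr π₂ p₂ e₂ → HeapRepr π p (RE.seq e₁ e₂)
  | star {π π₁ : Heap α} {p p₁ : ℕ} {e₁ : RE α} :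
      π = hUnion (singleH p (Node.star p₁)) π₁ →
      hDisj (singleH p (Node.star p₁)) π₁ →
      HeapRepr π₁ p₁ e₁ → HeapRepr π p (RE.star e₁)

/-- `π ⊨ k`: the continuation function `k : dom(π) → dom(π) ∪ {null}` (with root `p₀`). -/
def KOk {α : Type} (π : Heap α) (k : ℕ → Option ℕ) (p₀ : ℕ) : Prop :=
  (∀ p : ℕ, (π p).isSome → k p = none ∨ ∃ q : ℕ, k p = some q ∧ (π q).isSome) ∧
  (∀ p q₁ q₂ : ℕ, π p = some (Node.alt q₁ q₂) → k q₁ = k p ∧ k q₂ = k p) ∧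
  (∀ p q₁ q₂ : ℕ, π p = some (Node.seq q₁ q₂) → k q₁ = some q₂ ∧ k q₂ = k p) ∧
  (∀ p q₁ : ℕ, π p = some (Node.star q₁) → k q₁ = some p) ∧
  k p₀ = none

/-- Unlabeled pointer transitions `p ⇀ q` relative to `π` and `k`. -/
inductive PStep {α : Type} (π : Heap α) (k : ℕ → Option ℕ) :
    Option ℕ → Option ℕ → Prop where
  | altL {p q₁ q₂ : ℕ} : π p = some (Node.alt q₁ q₂) → PStep π k (some p) (some q₁)
  | altR {p q₁ q₂ : ℕ} : π p = some (Node.alt q₁ q₂) → PStep π k (some p) (some q₂)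
  | seq {p q₁ q₂ : ℕ} : π p = some (Node.seq q₁ q₂) → PStep π k (some p) (some q₁)
  | starIn {p q₁ : ℕ} : π p = some (Node.star q₁) → PStep π k (some p) (some q₁)
  | starOut {p q₁ : ℕ} : π p = some (Node.star q₁) → PStep π k (some p) (k p)
  | eps {p : ℕ} : π p = some Node.eps → PStep π k (some p) (k p)

/-- Labeled pointer transitions `p ⇀ᵃ k(p)` relative to `π` and `k`. -/
inductive PStepA {α : Type} (π : Heap α) (k : ℕ → Option ℕ) (a : α) :
    Option ℕ → Option ℕ → Prop where
  | ch {p : ℕ} : π p = some (Node.ch a) → PStepA π k a (some p) (k p)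

/-- Transitions of the PWπ machine on configurations `⟨p | w⟩`. -/
inductive PWStep {α : Type} (π : Heap α) (k : ℕ → Option ℕ) :
    Option ℕ × List α → Option ℕ × List α → Prop where
  | silent {p q : Option ℕ} {w : List α} : PStep π k p q → PWStep π k (p, w) (q, w)
  | read {a : α} {p q : Option ℕ} {w : List α} :
      PStepA π k a p q → PWStep π k (p, a :: w) (q, w)

/-- `evolve(S)`: all character nodes reachable from `S` by `⇀*`. -/
def evolve {α : Type} (π : Heap α) (k : ℕ → Option ℕ) (S : Set (Option ℕ)) :
    Set (Option ℕ) :=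
  { q : Option ℕ | ∃ (n : ℕ) (a : α), q = some n ∧ π n = some (Node.ch a) ∧
      ∃ p ∈ S, Relation.ReflTransGen (PStep π k) p q }

/-- The lockstep transition `S ⟹ evolve(S)` on pointer sets. -/
def EvolveRel {α : Type} (π : Heap α) (k : ℕ → Option ℕ)
    (S S' : Set (Option ℕ)) : Prop :=
  S' = evolve π k S

/-- The lockstep transition `S ⟹ᵃ S'` on pointer sets. -/
def CharRel {α : Type} (π : Heap α) (k : ℕ → Option ℕ) (a : α)
    (S S' : Set (Option ℕ)) : Prop :=
  S' = { q : Option ℕ | ∃ p ∈ S, PStepA π k a p q }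

/-- Transitions of the generic lockstep machine on configurations `⟨S | w⟩`. -/
inductive LockStep {α : Type} (π : Heap α) (k : ℕ → Option ℕ) :
    Set (Option ℕ) × List α → Set (Option ℕ) × List α → Prop where
  | evolve {S S' : Set (Option ℕ)} {w : List α} :
      EvolveRel π k S S' → LockStep π k (S, w) (S', w)
  | read {S S' : Set (Option ℕ)} {a : α} {w : List α} :
      CharRel π k a S S' → LockStep π k (S, a :: w) (S', w)

/-- The child relation on pointers of a heap: `q` is a pointer argument of the node at `p`. -/
def Child {α : Type} (π : Heap α) (p q : ℕ) : Prop :=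
  (∃ q₂ : ℕ, π p = some (Node.alt q q₂)) ∨ (∃ q₁ : ℕ, π p = some (Node.alt q₁ q)) ∨
  (∃ q₂ : ℕ, π p = some (Node.seq q q₂)) ∨ (∃ q₁ : ℕ, π p = some (Node.seq q₁ q)) ∨
  π p = some (Node.star q)

/-- The subtree of `π` rooted at `q` represents `e`. -/
def ReprSub {α : Type} (π : Heap α) (q : ℕ) (e : RE α) : Prop :=
  ∃ π₁ π₂ : Heap α, hDisj π₁ π₂ ∧ π = hUnion π₁ π₂ ∧ HeapRepr π₁ q e

/-- `StackOf π k p l`: the continuation stack reconstructed from `p` by following `k` is `l`. -/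
inductive StackOf {α : Type} (π : Heap α) (k : ℕ → Option ℕ) :
    ℕ → List (RE α) → Prop where
  | nil {p : ℕ} : k p = none → StackOf π k p []
  | cons {p q : ℕ} {e' : RE α} {l : List (RE α)} :
      k p = some q → ReprSub π q e' → StackOf π k q l → StackOf π k p (e' :: l)

/-- Processes of the process calculus.  Messages `p̄` are on pointer-or-null channels;
receivers `p.M` listen on non-null pointer channels; `a.M` is an `n`-way sync prefix. -/
inductive Proc (α : Type) : Type where
  | msg (p : Option ℕ) : Proc α
  | par (M₁ M₂ : Proc α) : Proc α
  | recv (p : ℕ) (M : Proc α) : Proc α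
  | sync (a : α) (M : Proc α) : Proc α

/-- Structural congruence: associativity/commutativity of `∥`. -/
inductive PCong {α : Type} : Proc α → Proc α → Prop where
  | refl (M : Proc α) : PCong M M
  | symm {M N : Proc α} : PCong M N → PCong N M
  | trans {M N K : Proc α} : PCong M N → PCong N K → PCong M K
  | parComm (M N : Proc α) : PCong (Proc.par M N) (Proc.par N M)
  | parAssoc (M N K : Proc α) :
      PCong (Proc.par (Proc.par M N) K) (Proc.par M (Proc.par N K))
  | par {M M' N N' : Proc α} :
      PCong M M' → PCong N N' → PCong (Proc.par M N) (Proc.par M' N')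
  | recv (p : ℕ) {M M' : Proc α} : PCong M M' → PCong (Proc.recv p M) (Proc.recv p M')
  | sync (a : α) {M M' : Proc α} : PCong M M' → PCong (Proc.sync a M) (Proc.sync a M')

/-- Silent transitions `M → M'`: handshake communication, closed under parallel
context and structural congruence. -/
inductive PSilent {α : Type} : Proc α → Proc α → Prop where
  | comm (p : ℕ) (M : Proc α) :
      PSilent (Proc.par (Proc.recv p M) (Proc.msg (some p))) M
  | parL {M M' : Proc α} (N : Proc α) :
      PSilent M M' → PSilent (Proc.par M N) (Proc.par M' N)
  | congr {M M₁ M₂ M' : Proc α} :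
      PCong M M₁ → PSilent M₁ M₂ → PCong M₂ M' → PSilent M M'

/-- `parList M [N₁, …, Nₙ] = M ∥ N₁ ∥ ⋯ ∥ Nₙ`. -/
def parList {α : Type} : Proc α → List (Proc α) → Proc α
  | M, [] => M
  | M, N :: l => Proc.par M (parList N l)

/-- Labeled transitions `M →ᵃ M'`: `n`-way synchronization on `a` (discarding the rest),
closed under structural congruence. -/
inductive PLabel {α : Type} (a : α) : Proc α → Proc α → Prop where
  | sync (M₀ : Proc α) (Ms : List (Proc α)) (M' : Proc α) :
      (¬ ∃ M'' M''' : Proc α, PCong M' (Proc.par (Proc.sync a M'') M''')) →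
      (∀ N : Proc α, ¬ PSilent M' N) →
      PLabel a (Proc.par (parList (Proc.sync a M₀) (Ms.map (Proc.sync a))) M')
        (parList M₀ Ms)
  | congr {M M₁ M₂ M' : Proc α} :
      PCong M M₁ → PLabel a M₁ M₂ → PCong M₂ M' → PLabel a M M'

/-- The translation `⟦p⟧π` of a heap node into a process. -/
def transNode {α : Type} (k : ℕ → Option ℕ) (p : ℕ) : Node α → Proc α
  | Node.alt q₁ q₂ => Proc.recv p (Proc.par (Proc.msg (some q₁)) (Proc.msg (some q₂)))
  | Node.seq q₁ _ => Proc.recv p (Proc.msg (some q₁))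
  | Node.star q₁ => Proc.recv p (Proc.par (Proc.msg (some q₁)) (Proc.msg (k p)))
  | Node.eps => Proc.recv p (Proc.msg (k p))
  | Node.ch a => Proc.recv p (Proc.sync a (Proc.msg (k p)))

/-- The process for the node at pointer `p` of heap `π` (dummy if `p ∉ dom(π)`). -/
def nodeProc {α : Type} (π : Heap α) (k : ℕ → Option ℕ) (p : ℕ) : Proc α :=
  match π p with
  | some v => transNode k p v
  | none => Proc.msg none

/-- `M` is (a representation of) the translation `⟦π⟧`: the parallel composition
of `⟦p⟧π` over all `p ∈ dom(π)`. -/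
def HeapProcOf {α : Type} (π : Heap α) (k : ℕ → Option ℕ) (M : Proc α) : Prop :=
  ∃ (p : ℕ) (l : List ℕ), (p :: l).Nodup ∧ (∀ q : ℕ, (π q).isSome ↔ q ∈ p :: l) ∧
    M = parList (nodeProc π k p) (l.map (nodeProc π k))

/-- `M` is (a representation of) `S̄`: the parallel composition of the messages
`p̄` for `p ∈ S`. -/
def MsgsOf {α : Type} (S : Set (Option ℕ)) (M : Proc α) : Prop :=
  ∃ (p : Option ℕ) (l : List (Option ℕ)), (p :: l).Nodup ∧
    (∀ q : Option ℕ, q ∈ S ↔ q ∈ p :: l) ∧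
    M = parList (Proc.msg p) (l.map Proc.msg)

lemma singleH_self {α : Type} (p : ℕ) (v : Node α) : singleH p v p = some v := by
  simp [singleH]

lemma singleH_eq {α : Type} {p q : ℕ} {v n : Node α} (h : singleH p v q = some n) :
    q = p ∧ n = v := by
  unfold singleH at h
  by_cases hq : q = p <;> simp [hq] at h
  exact ⟨hq, h.symm⟩

lemma hUnion_some_left {α : Type} {π₁ π₂ : Heap α} {q : ℕ} {n : Node α}
    (h : π₁ q = some n) : hUnion π₁ π₂ q = some n := by
  simp [hUnion, h]

lemma hUnion_none_left {α : Type} {π₁ π₂ : Heap α} {q : ℕ}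
    (h : π₁ q = none) : hUnion π₁ π₂ q = π₂ q := by
  simp [hUnion, h]

lemma hUnion_cases {α : Type} {π₁ π₂ : Heap α} {q : ℕ} {n : Node α}
    (h : hUnion π₁ π₂ q = some n) : π₁ q = some n ∨ π₂ q = some n := by
  unfold hUnion at h
  cases h1 : π₁ q with
  | none => right; rwa [h1] at h; 
  | some m => left; rw [h1] at h; simpa using h

lemma heapRepr_root_dom {α : Type} {π : Heap α} {p : ℕ} {e : RE α}
    (h : HeapRepr π p e) : (π p).isSome := by
  cases h with
  | eps => simp [singleH_self]
  | ch => simp [singleH_self]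
  | alt heq _ _ _ _ _ => rw [heq, hUnion_some_left (singleH_self _ _)]; simp
  | seq heq _ _ _ _ _ => rw [heq, hUnion_some_left (singleH_self _ _)]; simp
  | star heq _ _ => rw [heq, hUnion_some_left (singleH_self _ _)]; simp

lemma term_of_term_k {k : ℕ → Option ℕ} {p : ℕ}
    (h : ∃ n : ℕ, (fun o : Option ℕ => o.bind k)^[n] (k p) = none) :
    ∃ n : ℕ, (fun o : Option ℕ => o.bind k)^[n] (some p) = none := by
  obtain ⟨n, hn⟩ := h
  exact ⟨n + 1, by rw [Function.iterate_succ_apply]; exact hn⟩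

lemma chain_aux {α : Type} {π : Heap α} {p : ℕ} {e : RE α} (h : HeapRepr π p e) :
    ∀ (k : ℕ → Option ℕ),
    (∀ r q₁ q₂ : ℕ, π r = some (Node.alt q₁ q₂) → k q₁ = k r ∧ k q₂ = k r) →
    (∀ r q₁ q₂ : ℕ, π r = some (Node.seq q₁ q₂) → k q₁ = some q₂ ∧ k q₂ = k r) →
    (∀ r q₁ : ℕ, π r = some (Node.star q₁) → k q₁ = some r) →
    (∃ n : ℕ, (fun o : Option ℕ => o.bind k)^[n] (k p) = none) →
    ∀ q : ℕ, (π q).isSome → ∃ n : ℕ, (fun o : Option ℕ => o.bind k)^[n] (some q) = none := by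
  induction h with
  | @eps p =>
    intro k _ _ _ hterm q hq
    rw [Option.isSome_iff_exists] at hq
    obtain ⟨n, hn⟩ := hq
    obtain ⟨rfl, -⟩ := singleH_eq hn
    exact term_of_term_k hterm
  | @ch p a =>
    intro k _ _ _ hterm q hq
    rw [Option.isSome_iff_exists] at hq
    obtain ⟨n, hn⟩ := hq
    obtain ⟨rfl, -⟩ := singleH_eq hn
    exact term_of_term_k hterm
  | @alt π π₁ π₂ p p₁ p₂ e₁ e₂ heq hd1 hd2 hd12 h1 h2 ih1 ih2 =>
    intro k halt hseq hstar hterm q hq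
    have hroot : π p = some (Node.alt p₁ p₂) := by
      rw [heq]; exact hUnion_some_left (singleH_self _ _)
    have lift1 : ∀ r n, π₁ r = some n → π r = some n := by
      intro r n hr
      have hs : (singleH p (Node.alt p₁ p₂) : Heap α) r = none := by
        rcases hd1 r with h' | h'
        · exact h'
        · rw [hr] at h'; exact absurd h' (by simp)
      rw [heq, hUnion_none_left hs]
      exact hUnion_some_left hr
    have lift2 : ∀ r n, π₂ r = some n → π r = some n := by
      intro r n hr
      have hs : (singleH p (Node.alt p₁ p₂) : Heap α) r = none := by
        rcases hd2 r with h' | h'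
        · exact h'
        · rw [hr] at h'; exact absurd h' (by simp)
      have h1' : π₁ r = none := by
        rcases hd12 r with h' | h'
        · exact h'
        · rw [hr] at h'; exact absurd h' (by simp)
      rw [heq, hUnion_none_left hs, hUnion_none_left h1']
      exact hr
    obtain ⟨hk1, hk2⟩ := halt p p₁ p₂ hroot
    have t1 : ∀ q : ℕ, (π₁ q).isSome → ∃ n : ℕ,
        (fun o : Option ℕ => o.bind k)^[n] (some q) = none :=
      ih1 k (fun r a b hr => halt r a b (lift1 _ _ hr))
        (fun r a b hr => hseq r a b (lift1 _ _ hr))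
        (fun r a hr => hstar r a (lift1 _ _ hr)) (hk1 ▸ hterm)
    have t2 : ∀ q : ℕ, (π₂ q).isSome → ∃ n : ℕ,
        (fun o : Option ℕ => o.bind k)^[n] (some q) = none :=
      ih2 k (fun r a b hr => halt r a b (lift2 _ _ hr))
        (fun r a b hr => hseq r a b (lift2 _ _ hr))
        (fun r a hr => hstar r a (lift2 _ _ hr)) (hk2 ▸ hterm)
    rw [Option.isSome_iff_exists] at hq
    obtain ⟨n, hn⟩ := hq
    rw [heq] at hn
    rcases hUnion_cases hn with hn' | hn'
    · obtain ⟨rfl, -⟩ := singleH_eq hn'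
      exact term_of_term_k hterm
    · rcases hUnion_cases hn' with hn'' | hn''
      · exact t1 q (by rw [hn'']; rfl)
      · exact t2 q (by rw [hn'']; rfl)
  | @seq π π₁ π₂ p p₁ p₂ e₁ e₂ heq hd1 hd2 hd12 h1 h2 ih1 ih2 =>
    intro k halt hseq hstar hterm q hq
    have hroot : π p = some (Node.seq p₁ p₂) := by
      rw [heq]; exact hUnion_some_left (singleH_self _ _)
    have lift1 : ∀ r n, π₁ r = some n → π r = some n := by
      intro r n hr
      have hs : (singleH p (Node.seq p₁ p₂) : Heap α) r = none := by
        rcases hd1 r with h' | h'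
        · exact h'
        · rw [hr] at h'; exact absurd h' (by simp)
      rw [heq, hUnion_none_left hs]
      exact hUnion_some_left hr
    have lift2 : ∀ r n, π₂ r = some n → π r = some n := by
      intro r n hr
      have hs : (singleH p (Node.seq p₁ p₂) : Heap α) r = none := by
        rcases hd2 r with h' | h'
        · exact h'
        · rw [hr] at h'; exact absurd h' (by simp)
      have h1' : π₁ r = none := by
        rcases hd12 r with h' | h'
        · exact h'
        · rw [hr] at h'; exact absurd h' (by simp)
      rw [heq, hUnion_none_left hs, hUnion_none_left h1']
      exact hr
    obtain ⟨hk1, hk2⟩ := hseq p p₁ p₂ hroot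
    have t2 : ∀ q : ℕ, (π₂ q).isSome → ∃ n : ℕ,
        (fun o : Option ℕ => o.bind k)^[n] (some q) = none :=
      ih2 k (fun r a b hr => halt r a b (lift2 _ _ hr))
        (fun r a b hr => hseq r a b (lift2 _ _ hr))
        (fun r a hr => hstar r a (lift2 _ _ hr)) (hk2 ▸ hterm)
    have tp2 : ∃ n : ℕ, (fun o : Option ℕ => o.bind k)^[n] (some p₂) = none :=
      t2 p₂ (heapRepr_root_dom h2)
    have t1 : ∀ q : ℕ, (π₁ q).isSome → ∃ n : ℕ,
        (fun o : Option ℕ => o.bind k)^[n] (some q) = none :=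
      ih1 k (fun r a b hr => halt r a b (lift1 _ _ hr))
        (fun r a b hr => hseq r a b (lift1 _ _ hr))
        (fun r a hr => hstar r a (lift1 _ _ hr)) (hk1 ▸ tp2)
    rw [Option.isSome_iff_exists] at hq
    obtain ⟨n, hn⟩ := hq
    rw [heq] at hn
    rcases hUnion_cases hn with hn' | hn'
    · obtain ⟨rfl, -⟩ := singleH_eq hn'
      exact term_of_term_k hterm
    · rcases hUnion_cases hn' with hn'' | hn''
      · exact t1 q (by rw [hn'']; rfl)
      · exact t2 q (by rw [hn'']; rfl)
  | @star π π₁ p p₁ e₁ heq hd1 h1 ih1 =>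
    intro k halt hseq hstar hterm q hq
    have hroot : π p = some (Node.star p₁) := by
      rw [heq]; exact hUnion_some_left (singleH_self _ _)
    have lift1 : ∀ r n, π₁ r = some n → π r = some n := by
      intro r n hr
      have hs : (singleH p (Node.star p₁) : Heap α) r = none := by
        rcases hd1 r with h' | h'
        · exact h'
        · rw [hr] at h'; exact absurd h' (by simp)
      rw [heq, hUnion_none_left hs]
      exact hr
    have hk1 : k p₁ = some p := hstar p p₁ hroot
    have tp : ∃ n : ℕ, (fun o : Option ℕ => o.bind k)^[n] (some p) = none :=
      term_of_term_k hterm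
    have t1 : ∀ q : ℕ, (π₁ q).isSome → ∃ n : ℕ,
        (fun o : Option ℕ => o.bind k)^[n] (some q) = none :=
      ih1 k (fun r a b hr => halt r a b (lift1 _ _ hr))
        (fun r a b hr => hseq r a b (lift1 _ _ hr))
        (fun r a hr => hstar r a (lift1 _ _ hr)) (hk1 ▸ tp)
    rw [Option.isSome_iff_exists] at hq
    obtain ⟨n, hn⟩ := hq
    rw [heq] at hn
    rcases hUnion_cases hn with hn' | hn'
    · obtain ⟨rfl, -⟩ := singleH_eq hn'
      exact tp
    · exact t1 q (by rw [hn']; rfl)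

/-- Well-foundedness of the continuation chain: if `π, p₀ ⊨ e` and `π ⊨ k`,
then for every `p ∈ dom(π)` the chain `p, k(p), k(k(p)), …` reaches null after finitely
many applications of `k`. -/
theorem knode_chain_terminates {α : Type} [Fintype α] {π : Heap α} {p₀ : ℕ} {e : RE α}
    {k : ℕ → Option ℕ}
    (h : HeapRepr π p₀ e) (hk : KOk π k p₀) :
    ∀ p ∈ hDom π, ∃ n : ℕ, (fun o : Option ℕ => o.bind k)^[n] (some p) = none := by
  intro p hp
  obtain ⟨-, halt, hseq, hstar, hnull⟩ := hk
  exact chain_aux h k halt hseq hstar ⟨0, by simp [hnull]⟩ p hp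

end RegexMachines
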